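/- arXiv:math/0702337 — 2 statements merged into one kernel-verified Lean document; each statement's English description precedes it below -/
import Mathlib

section
/- Let U, V be bialgebras in duality via an invertible pairing, and let D = D(U^cop, V) be the generalized quantum double with multiplication (m ⊗ x)(n ⊗ y) = ⟨n₃, x₁⟩⟨S_U⁻¹(n₁), x₃⟩ mn₂ ⊗ x₂y. Then there exists a bialgebra projection π : D → U^cop with π ∘ i = id (where i(m) = m ⊗ 1) if and only if there exists a bialgebra morphism γ : V → U^cop satisfying γ(y)m = ρ⁻¹(m₁, y₃)ρ(m₃, y₁) m₂ γ(y₂) for all y ∈ V, m ∈ U, where ρ is the skew pairing on U^cop ⊗ V induced by ⟨,⟩. -/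
open TensorProduct Coalgebra

noncomputable section

/-- Convolution product of two `k`-valued functionals on a coalgebra. -/
def conv {k C : Type*} [CommRing k] [AddCommGroup C] [Module k C] [CoalgebraStruct k C]
    (f g : C →ₗ[k] k) : C →ₗ[k] k :=
  LinearMap.mul' k k ∘ₗ TensorProduct.map f g ∘ₗ CoalgebraStruct.comul

variable {k U V : Type*} [CommRing k] [Ring U] [Ring V] [Bialgebra k U] [Bialgebra k V]

/-- The comultiplication of the coalgebra `U^cop ⊗ V`. -/
def comulCop : U ⊗[k] V →ₗ[k] (U ⊗[k] V) ⊗[k] (U ⊗[k] V) :=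
  (TensorProduct.tensorTensorTensorComm k U U V V).toLinearMap ∘ₗ
    TensorProduct.map ((TensorProduct.comm k U U).toLinearMap ∘ₗ Coalgebra.comul)
      Coalgebra.comul

/-- Convolution of bilinear forms on `U ⊗ V` with respect to the coalgebra `U^cop ⊗ V`. -/
def convCop (f g : U ⊗[k] V →ₗ[k] k) : U ⊗[k] V →ₗ[k] k :=
  LinearMap.mul' k k ∘ₗ TensorProduct.map f g ∘ₗ comulCop

/-!
A projection `π` splitting `m ↦ m ⊗ 1` is determined by `γ y = π (1 ⊗ y)`: in the double
`(m ⊗ 1)(1 ⊗ y) = m ⊗ y`, so multiplicativity forces `π (m ⊗ y) = m γ(y)`; conversely every `γ`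
defines such a `π`. Under this correspondence `π` is a coalgebra map iff `γ` is, `γ` is
multiplicative because `(1 ⊗ x)(1 ⊗ y) = 1 ⊗ xy`, and multiplicativity of `π` on the products
`(1 ⊗ y)(m ⊗ 1)`, which carry all the twisting of the double, is exactly the commutation relation
for `γ`.
-/

universe w w' u₁ u₂ u₃ u₄ u₅ u₆ u₇ u₈

namespace Coalgebra

variable {R A M : Type*} [CommSemiring R] [AddCommMonoid A] [Module R A]
  [AddCommMonoid M] {a : A} {ι : Type*} {κ : ι → Type*}

lemma sum_counit_right_smul [Coalgebra R A] (r : Repr R a ι) :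
    ∑ i ∈ r.index, counit (R := R) (r.right i) • r.left i = a := by
  simpa only [map_sum, _root_.TensorProduct.rid_tmul, one_smul]
    using congrArg (_root_.TensorProduct.rid R A) (sum_tmul_counit_eq (R := R) r)

namespace Repr

section CoalgebraStruct

variable [CoalgebraStruct R A]

noncomputable def indexEquiv (r : Repr R a ι) : ULift.{w} (Fin r.index.card) ≃ r.index :=
  Equiv.ulift.trans r.index.equivFin.symm

/-- Reindexing by `Fin` moves a representation into any universe, so that it can be fed to a
hypothesis quantifying over index types of one fixed universe. -/
noncomputable abbrev ulift (r : Repr R a ι) : Repr R a (ULift.{w} (Fin r.index.card)) where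
  index := Finset.univ
  left i := r.left (r.indexEquiv i)
  right i := r.right (r.indexEquiv i)
  eq := by
    rw [← r.eq, ← Finset.sum_coe_sort r.index, ← r.indexEquiv.sum_comp]

/-- Sweedler's `∑ F a₁ a₂ a₃`, read off from a representation of `Δ a` and representations of
the coproducts of its left factors. -/
def sum₃ (r : Repr R a ι) (r' : ∀ i, Repr R (r.left i) (κ i)) (F : A → A → A → M) : M :=
  ∑ i ∈ r.index, ∑ j ∈ (r' i).index, F ((r' i).left j) ((r' i).right j) (r.right i)

lemma sum₃_ulift (r : Repr R a ι) (r' : ∀ i, Repr R (r.left i) (κ i)) (F : A → A → A → M) :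
    r.ulift.{w}.sum₃ (fun i => (r' (r.indexEquiv i)).ulift.{w'}) F = r.sum₃ r' F := by
  simp only [sum₃]
  rw [← Finset.sum_coe_sort r.index, ← r.indexEquiv.sum_comp]
  refine Fintype.sum_congr _ _ fun i => ?_
  rw [← Finset.sum_coe_sort (r' _).index, ← (r' _).indexEquiv.sum_comp]

lemma map_sum₃ {N F : Type*} [AddCommMonoid N] [FunLike F M N] [AddMonoidHomClass F M N] (f : F)
    (r : Repr R a ι) (r' : ∀ i, Repr R (r.left i) (κ i)) (G : A → A → A → M) :
    f (r.sum₃ r' G) = r.sum₃ r' fun a₁ a₂ a₃ => f (G a₁ a₂ a₃) := by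
  simp only [sum₃, map_sum]

lemma sum_sum_sum_sum_eq_sum₃_sum₃ {B : Type*} [AddCommMonoid B] [Module R B]
    [CoalgebraStruct R B] {b : B} {ι' : Type*} {κ' : ι' → Type*}
    (r : Repr R a ι) (r' : ∀ i, Repr R (r.left i) (κ i))
    (s : Repr R b ι') (s' : ∀ i, Repr R (s.left i) (κ' i)) (T : A → A → A → B → B → B → M) :
    ∑ i ∈ r.index, ∑ i' ∈ s.index, ∑ j ∈ (r' i).index, ∑ j' ∈ (s' i').index,
      T ((r' i).left j) ((r' i).right j) (r.right i) ((s' i').left j') ((s' i').right j')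
        (s.right i') =
    r.sum₃ r' fun a₁ a₂ a₃ => s.sum₃ s' fun b₁ b₂ b₃ => T a₁ a₂ a₃ b₁ b₂ b₃ := by
  simp only [sum₃]
  exact Finset.sum_congr rfl fun i _ => Finset.sum_comm

end CoalgebraStruct

lemma sum₃_counit_mul_counit_smul [Coalgebra R A] [Module R M] (f : A →ₗ[R] M)
    (r : Repr R a ι) (r' : ∀ i, Repr R (r.left i) (κ i)) :
    r.sum₃ r' (fun a₁ a₂ a₃ => (counit (R := R) a₁ * counit (R := R) a₃) • f a₂) = f a :=
  calc r.sum₃ r' (fun a₁ a₂ a₃ => (counit (R := R) a₁ * counit (R := R) a₃) • f a₂)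
      = ∑ i ∈ r.index, counit (R := R) (r.right i) •
          f (∑ j ∈ (r' i).index, counit (R := R) ((r' i).left j) • (r' i).right j) := by
        simp only [sum₃, map_sum, map_smul, Finset.smul_sum, smul_smul, mul_comm]
    _ = f (∑ i ∈ r.index, counit (R := R) (r.right i) • r.left i) := by
        simp only [sum_counit_smul, map_sum, map_smul]
    _ = f a := by rw [sum_counit_right_smul]

end Repr

end Coalgebra

namespace Coalgebra.Repr

variable (R A : Type*) [CommSemiring R] [Semiring A] [Bialgebra R A]

def one : Repr R (1 : A) PUnit.{w + 1} where
  index := Finset.univ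
  left _ := 1
  right _ := 1
  eq := by simp [Bialgebra.comul_one, Algebra.TensorProduct.one_def]

@[simp]
lemma sum₃_one {M : Type*} [AddCommMonoid M] (F : A → A → A → M) :
    (one.{w} R A).sum₃ (fun _ => one.{w'} R A) F = F 1 1 1 := by
  simp [sum₃, one]

end Coalgebra.Repr

lemma conv_counit_left {C : Type*} [AddCommGroup C] [Module k C] [Coalgebra k C]
    (g : C →ₗ[k] k) : conv counit g = g := by
  have h : LinearMap.mul' k k ∘ₗ TensorProduct.map counit g =
      g ∘ₗ lift (LinearMap.lsmul k C ∘ₗ counit) :=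
    TensorProduct.ext' fun (a b : C) => by simp
  rw [conv, ← LinearMap.comp_assoc, h, LinearMap.comp_assoc,
    lift_lsmul_comp_counit_comp_comul, LinearMap.comp_id]

lemma comulCop_comp_mk_one :
    comulCop ∘ₗ mk k U V 1 = TensorProduct.map (mk k U V 1) (mk k U V 1) ∘ₗ comul := by
  ext y
  simp only [comulCop, LinearMap.comp_apply, mk_apply, TensorProduct.map_tmul,
    Bialgebra.comul_one, Algebra.TensorProduct.one_def, LinearEquiv.coe_coe, comm_tmul]
  induction comul (R := k) y using TensorProduct.induction_on with
  | zero => simp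
  | tmul a b => simp
  | add a b ha hb => simp only [tmul_add, map_add, ha, hb]

lemma comulCop_one_tmul (y : V) :
    comulCop ((1 : U) ⊗ₜ[k] y) = TensorProduct.map (mk k U V 1) (mk k U V 1) (comul y) :=
  LinearMap.congr_fun comulCop_comp_mk_one y

lemma convCop_lift_one_tmul (f g : U →ₗ[k] V →ₗ[k] k) (y : V) :
    convCop (lift f) (lift g) ((1 : U) ⊗ₜ[k] y) = conv (f 1) (g 1) y := by
  have h : lift f ∘ₗ mk k U V 1 = f 1 := LinearMap.ext fun _ => lift.tmul _ _
  have h' : lift g ∘ₗ mk k U V 1 = g 1 := LinearMap.ext fun _ => lift.tmul _ _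
  rw [convCop, LinearMap.comp_apply, LinearMap.comp_apply, comulCop_one_tmul, map_map, h, h']
  rfl

lemma pinv_one_eq_counit {p pinv : U →ₗ[k] V →ₗ[k] k} (hp : p 1 = counit)
    (hpinv : convCop (lift p) (lift pinv) =
      LinearMap.mul' k k ∘ₗ TensorProduct.map counit counit) :
    pinv 1 = counit := LinearMap.ext fun y =>
  calc pinv 1 y = conv (p 1) (pinv 1) y := by rw [hp, conv_counit_left]
    _ = convCop (lift p) (lift pinv) ((1 : U) ⊗ₜ[k] y) := (convCop_lift_one_tmul p pinv y).symm
    _ = counit y := by simp [hpinv]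

namespace QuantumDouble

open Coalgebra.Repr

variable (p pinv : U →ₗ[k] V →ₗ[k] k)

/-- `mD` is the multiplication `(m ⊗ x)(n ⊗ y) = ⟨n₃, x₁⟩ ⟨S⁻¹ n₁, x₃⟩ m n₂ ⊗ x₂ y` of the
double, where `pinv` plays the role of `⟨S⁻¹ ·, ·⟩`. -/
def IsMul (mD : U ⊗[k] V →ₗ[k] U ⊗[k] V →ₗ[k] U ⊗[k] V) : Prop :=
  ∀ (m : U) (x : V) (n : U) (y : V)
    {ιn : Type u₁} {κn : ιn → Type u₂} {ιx : Type u₃} {κx : ιx → Type u₄}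
    (rn : Repr k n ιn) (rn' : ∀ i, Repr k (rn.left i) (κn i))
    (rx : Repr k x ιx) (rx' : ∀ a, Repr k (rx.left a) (κx a)),
    mD (m ⊗ₜ[k] x) (n ⊗ₜ[k] y) =
      ∑ i ∈ rn.index, ∑ a ∈ rx.index, ∑ j ∈ (rn' i).index, ∑ b ∈ (rx' a).index,
        (p (rn.right i) ((rx' a).left b) * pinv ((rn' i).left j) (rx.right a)) •
          ((m * (rn' i).right j) ⊗ₜ[k] ((rx' a).right b * y))

/-- In Sweedler notation, `γ y * m = ρ⁻¹(m₁, y₃) ρ(m₃, y₁) m₂ γ(y₂)` with `ρ = p`, `ρ⁻¹ = pinv`. -/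
def CommutationRelation (γ : V →ₗ[k] U) : Prop :=
  ∀ (y : V) (m : U)
    {ιm : Type u₁} {κm : ιm → Type u₂} {ιy : Type u₃} {κy : ιy → Type u₄}
    (rm : Repr k m ιm) (rm' : ∀ i, Repr k (rm.left i) (κm i))
    (ry : Repr k y ιy) (ry' : ∀ a, Repr k (ry.left a) (κy a)),
    γ y * m =
      ∑ i ∈ rm.index, ∑ a ∈ ry.index, ∑ j ∈ (rm' i).index, ∑ b ∈ (ry' a).index,
        (pinv ((rm' i).left j) (ry.right a) * p (rm.right i) ((ry' a).left b)) •
          ((rm' i).right j * γ ((ry' a).right b))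

variable {p pinv} {mD : U ⊗[k] V →ₗ[k] U ⊗[k] V →ₗ[k] U ⊗[k] V}

theorem IsMul.tmul_mul_tmul (h : IsMul.{u₁, u₂, u₃, u₄} p pinv mD) (m : U) (x : V) (n : U)
    (y : V) {ιn : Type*} {κn : ιn → Type*} {ιx : Type*} {κx : ιx → Type*}
    (rn : Repr k n ιn) (rn' : ∀ i, Repr k (rn.left i) (κn i))
    (rx : Repr k x ιx) (rx' : ∀ a, Repr k (rx.left a) (κx a)) :
    mD (m ⊗ₜ[k] x) (n ⊗ₜ[k] y) =
      rn.sum₃ rn' fun n₁ n₂ n₃ => rx.sum₃ rx' fun x₁ x₂ x₃ =>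
        (p n₃ x₁ * pinv n₁ x₃) • ((m * n₂) ⊗ₜ[k] (x₂ * y)) := by
  rw [← sum₃_ulift.{u₁, u₂} rn rn']
  simp only [← sum₃_ulift.{u₃, u₄} rx rx']
  rw [← sum_sum_sum_sum_eq_sum₃_sum₃]
  exact h ..

theorem CommutationRelation.mul_eq {γ : V →ₗ[k] U}
    (h : CommutationRelation.{u₁, u₂, u₃, u₄} p pinv γ) (y : V) (m : U)
    {ιm : Type*} {κm : ιm → Type*} {ιy : Type*} {κy : ιy → Type*}
    (rm : Repr k m ιm) (rm' : ∀ i, Repr k (rm.left i) (κm i))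
    (ry : Repr k y ιy) (ry' : ∀ a, Repr k (ry.left a) (κy a)) :
    γ y * m =
      rm.sum₃ rm' fun m₁ m₂ m₃ => ry.sum₃ ry' fun y₁ y₂ y₃ =>
        (pinv m₁ y₃ * p m₃ y₁) • (m₂ * γ y₂) := by
  rw [← sum₃_ulift.{u₁, u₂} rm rm']
  simp only [← sum₃_ulift.{u₃, u₄} ry ry']
  rw [← sum_sum_sum_sum_eq_sum₃_sum₃]
  exact h ..

theorem IsMul.tmul_one_mul_one_tmul (h : IsMul.{u₁, u₂, u₃, u₄} p pinv mD)
    (hp : p 1 = counit) (hpinv : pinv 1 = counit) (u : U) (v : V) :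
    mD (u ⊗ₜ[k] 1) ((1 : U) ⊗ₜ[k] v) = u ⊗ₜ[k] v := by
  rw [h.tmul_mul_tmul u 1 1 v (one.{0} k U) (fun _ => one.{0} k U) (one.{0} k V)
    (fun _ => one.{0} k V)]
  simp [hp, hpinv]

theorem IsMul.one_tmul_mul_one_tmul (h : IsMul.{u₁, u₂, u₃, u₄} p pinv mD)
    (hp : p 1 = counit) (hpinv : pinv 1 = counit) (x y : V) :
    mD ((1 : U) ⊗ₜ[k] x) ((1 : U) ⊗ₜ[k] y) = (1 : U) ⊗ₜ[k] (x * y) := by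
  rw [h.tmul_mul_tmul 1 x 1 y (one.{0} k U) (fun _ => one.{0} k U) (ℛ k x) (fun _ => ℛ k _)]
  simp only [sum₃_one, hp, hpinv, one_mul]
  exact (ℛ k x).sum₃_counit_mul_counit_smul (mk k U V 1 ∘ₗ LinearMap.mulRight k y) _

section Projection

variable {π : U ⊗[k] V →ₗ[k] U}

theorem apply_tmul_eq_mul (h : IsMul.{u₁, u₂, u₃, u₄} p pinv mD)
    (hp : p 1 = counit) (hpinv : pinv 1 = counit)
    (hπ : ∀ a b, π (mD a b) = π a * π b) (hsplit : ∀ m, π (m ⊗ₜ[k] 1) = m) (u : U) (v : V) :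
    π (u ⊗ₜ[k] v) = u * (π ∘ₗ mk k U V 1) v := by
  rw [← h.tmul_one_mul_one_tmul hp hpinv u v, hπ, hsplit]
  rfl

theorem commutationRelation_comp_mk_one (h : IsMul.{u₁, u₂, u₃, u₄} p pinv mD)
    (hp : p 1 = counit) (hpinv : pinv 1 = counit)
    (hπ : ∀ a b, π (mD a b) = π a * π b) (hsplit : ∀ m, π (m ⊗ₜ[k] 1) = m) :
    CommutationRelation.{u₅, u₆, u₇, u₈} p pinv (π ∘ₗ mk k U V 1) := by
  intro y m _ _ _ _ rm rm' ry ry'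
  calc π ((1 : U) ⊗ₜ[k] y) * m = π (mD ((1 : U) ⊗ₜ[k] y) (m ⊗ₜ[k] 1)) := by rw [hπ, hsplit]
    _ = rm.sum₃ rm' fun m₁ m₂ m₃ => ry.sum₃ ry' fun y₁ y₂ y₃ =>
          (pinv m₁ y₃ * p m₃ y₁) • (m₂ * (π ∘ₗ mk k U V 1) y₂) := by
      simp only [h.tmul_mul_tmul 1 y m 1 rm rm' ry ry', map_sum₃, map_smul, one_mul, mul_one,
        apply_tmul_eq_mul h hp hpinv hπ hsplit, mul_comm (p _ _) (pinv _ _)]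
    _ = _ := (sum_sum_sum_sum_eq_sum₃_sum₃ rm rm' ry ry' fun m₁ m₂ m₃ y₁ y₂ y₃ =>
          (pinv m₁ y₃ * p m₃ y₁) • (m₂ * (π ∘ₗ mk k U V 1) y₂)).symm

theorem comm_comul_comp_mk_one
    (hπ : ((TensorProduct.comm k U U).toLinearMap ∘ₗ comul) ∘ₗ π =
      TensorProduct.map π π ∘ₗ comulCop) :
    ((TensorProduct.comm k U U).toLinearMap ∘ₗ comul) ∘ₗ π ∘ₗ mk k U V 1 =
      TensorProduct.map (π ∘ₗ mk k U V 1) (π ∘ₗ mk k U V 1) ∘ₗ comul := by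
  rw [← LinearMap.comp_assoc, hπ, LinearMap.comp_assoc, comulCop_comp_mk_one,
    ← LinearMap.comp_assoc, ← TensorProduct.map_comp]

end Projection

def proj (γ : V →ₗ[k] U) : U ⊗[k] V →ₗ[k] U :=
  LinearMap.mul' k U ∘ₗ TensorProduct.map LinearMap.id γ

variable {γ : V →ₗ[k] U}

@[simp]
lemma proj_tmul (m : U) (y : V) : proj γ (m ⊗ₜ[k] y) = m * γ y := rfl

theorem proj_mD (h : IsMul.{u₁, u₂, u₃, u₄} p pinv mD) (hγmul : ∀ x y, γ (x * y) = γ x * γ y)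
    (hγ : CommutationRelation.{u₅, u₆, u₇, u₈} p pinv γ) (a b : U ⊗[k] V) :
    proj γ (mD a b) = proj γ a * proj γ b := by
  induction a using TensorProduct.induction_on with
  | zero => simp
  | add a₁ a₂ h₁ h₂ => simp only [map_add, LinearMap.add_apply, h₁, h₂, add_mul]
  | tmul m x =>
    induction b using TensorProduct.induction_on with
    | zero => simp
    | add b₁ b₂ h₁ h₂ => simp only [map_add, h₁, h₂, mul_add]
    | tmul n y =>
      rw [h.tmul_mul_tmul m x n y (ℛ k n) (fun _ => ℛ k _) (ℛ k x) (fun _ => ℛ k _),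
        proj_tmul, proj_tmul, mul_assoc, ← mul_assoc (γ x),
        hγ.mul_eq x n (ℛ k n) (fun _ => ℛ k _) (ℛ k x) (fun _ => ℛ k _)]
      simp only [sum₃, map_sum, map_smul, proj_tmul, hγmul, Finset.mul_sum, Finset.sum_mul,
        smul_mul_assoc, mul_smul_comm, mul_assoc, mul_comm (p _ _) (pinv _ _)]

theorem map_proj_tensorTensorTensorComm (A : U ⊗[k] U) (B : V ⊗[k] V) :
    TensorProduct.map (proj γ) (proj γ) (tensorTensorTensorComm k U U V V (A ⊗ₜ[k] B)) =
      A * TensorProduct.map γ γ B := by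
  induction A using TensorProduct.induction_on with
  | zero => simp
  | add A₁ A₂ h₁ h₂ => simp only [add_tmul, map_add, h₁, h₂, add_mul]
  | tmul a b =>
    induction B using TensorProduct.induction_on with
    | zero => simp
    | add B₁ B₂ h₁ h₂ => simp only [tmul_add, map_add, h₁, h₂, mul_add]
    | tmul u v => simp [Algebra.TensorProduct.tmul_mul_tmul]

theorem comm_comul_comp_proj
    (hγ : ((TensorProduct.comm k U U).toLinearMap ∘ₗ comul) ∘ₗ γ =
      TensorProduct.map γ γ ∘ₗ comul) :
    ((TensorProduct.comm k U U).toLinearMap ∘ₗ comul) ∘ₗ proj γ =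
      TensorProduct.map (proj γ) (proj γ) ∘ₗ comulCop := by
  refine TensorProduct.ext' fun m x => ?_
  have hcomm (A B : U ⊗[k] U) : TensorProduct.comm k U U (A * B) =
      TensorProduct.comm k U U A * TensorProduct.comm k U U B :=
    map_mul (Algebra.TensorProduct.comm k U U) A B
  have hγx : TensorProduct.comm k U U (comul (γ x)) = TensorProduct.map γ γ (comul x) :=
    LinearMap.congr_fun hγ x
  simp only [LinearMap.comp_apply, LinearEquiv.coe_coe, proj_tmul, comulCop,
    TensorProduct.map_tmul]
  rw [Bialgebra.comul_mul, hcomm, hγx, map_proj_tensorTensorTensorComm]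

theorem counit_comp_proj (hγ : counit ∘ₗ γ = counit) :
    counit ∘ₗ proj γ = LinearMap.mul' k k ∘ₗ TensorProduct.map counit counit :=
  TensorProduct.ext' fun m y => by simp [← hγ]

end QuantumDouble

theorem statement6_general {k U V : Type*} [Field k] [Ring U] [Ring V]
    [Bialgebra k U] [Bialgebra k V]
    (p pinv : U →ₗ[k] V →ₗ[k] k)
    (hp3 : ∀ x : V, p 1 x = Coalgebra.counit x)
    (hpinv1 : convCop (TensorProduct.lift p) (TensorProduct.lift pinv) =
      LinearMap.mul' k k ∘ₗ TensorProduct.map Coalgebra.counit Coalgebra.counit)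
    -- `mD` is the multiplication of the generalized quantum double `D(U^cop, V)`:
    -- `(m ⊗ x)(n ⊗ y) = ⟨n₃, x₁⟩ ⟨S⁻¹(n₁), x₃⟩ m n₂ ⊗ x₂ y`
    (mD : U ⊗[k] V →ₗ[k] U ⊗[k] V →ₗ[k] U ⊗[k] V)
    (hmD : ∀ (m : U) (x : V) (n : U) (y : V)
      {ιn : Type*} {κn : ιn → Type*} {ιx : Type*} {κx : ιx → Type*}
      (rn : Coalgebra.Repr k n ιn) (rn' : ∀ i : rn.ι, Coalgebra.Repr k (rn.left i) (κn i))
      (rx : Coalgebra.Repr k x ιx) (rx' : ∀ a : rx.ι, Coalgebra.Repr k (rx.left a) (κx a)),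
      mD (m ⊗ₜ[k] x) (n ⊗ₜ[k] y) =
        ∑ i ∈ rn.index, ∑ a ∈ rx.index, ∑ j ∈ (rn' i).index, ∑ b ∈ (rx' a).index,
          (p (rn.right i) ((rx' a).left b) * pinv ((rn' i).left j) (rx.right a)) •
            ((m * (rn' i).right j) ⊗ₜ[k] ((rx' a).right b * y))) :
    -- there is a bialgebra projection π : D(U^cop, V) → U^cop splitting i ...
    ((∃ π : U ⊗[k] V →ₗ[k] U,
        (∀ a b : U ⊗[k] V, π (mD a b) = π a * π b) ∧
        π ((1 : U) ⊗ₜ[k] (1 : V)) = 1 ∧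
        ((TensorProduct.comm k U U).toLinearMap ∘ₗ Coalgebra.comul) ∘ₗ π =
          TensorProduct.map π π ∘ₗ comulCop ∧
        (Coalgebra.counit (R := k) (A := U)) ∘ₗ π =
          LinearMap.mul' k k ∘ₗ TensorProduct.map Coalgebra.counit Coalgebra.counit ∧
        (∀ m : U, π (m ⊗ₜ[k] (1 : V)) = m)) ↔
    -- ... iff there is a bialgebra morphism γ : V → U^cop with the stated property
      (∃ γ : V →ₗ[k] U,
        (∀ x y : V, γ (x * y) = γ x * γ y) ∧
        γ 1 = 1 ∧
        ((TensorProduct.comm k U U).toLinearMap ∘ₗ Coalgebra.comul) ∘ₗ γ =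
          TensorProduct.map γ γ ∘ₗ Coalgebra.comul ∧
        (Coalgebra.counit (R := k) (A := U)) ∘ₗ γ = Coalgebra.counit ∧
        (∀ (y : V) (m : U)
          {ιm : Type*} {κm : ιm → Type*} {ιy : Type*} {κy : ιy → Type*}
          (rm : Coalgebra.Repr k m ιm) (rm' : ∀ i : rm.ι, Coalgebra.Repr k (rm.left i) (κm i))
          (ry : Coalgebra.Repr k y ιy) (ry' : ∀ a : ry.ι, Coalgebra.Repr k (ry.left a) (κy a)),
          γ y * m =
            ∑ i ∈ rm.index, ∑ a ∈ ry.index, ∑ j ∈ (rm' i).index, ∑ b ∈ (ry' a).index,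
              (pinv ((rm' i).left j) (ry.right a) * p (rm.right i) ((ry' a).left b)) •
                ((rm' i).right j * γ ((ry' a).right b))))) := by
  have hmul : QuantumDouble.IsMul p pinv mD := hmD
  have hp : p 1 = counit := LinearMap.ext hp3
  have hpinv : pinv 1 = counit := pinv_one_eq_counit hp hpinv1
  constructor
  · rintro ⟨π, hπmul, hπone, hπcomul, hπcounit, hπsplit⟩
    refine ⟨π ∘ₗ mk k U V 1, fun x y => ?_, hπone, QuantumDouble.comm_comul_comp_mk_one hπcomul,
      ?_, QuantumDouble.commutationRelation_comp_mk_one hmul hp hpinv hπmul hπsplit⟩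
    · simp only [LinearMap.comp_apply, mk_apply]
      rw [← hmul.one_tmul_mul_one_tmul hp hpinv, hπmul]
    · rw [← LinearMap.comp_assoc, hπcounit]
      ext y
      simp
  · rintro ⟨γ, hγmul, hγone, hγcomul, hγcounit, hγcomm⟩
    exact ⟨QuantumDouble.proj γ, QuantumDouble.proj_mD hmul hγmul hγcomm, by simp [hγone],
      QuantumDouble.comm_comul_comp_proj hγcomul, QuantumDouble.counit_comp_proj hγcounit,
      fun m => by simp [hγone]⟩

/-- for bialgebras `U, V` in duality via an invertible pairing, the
generalized quantum double `D(U^cop, V)` admits a bialgebra projection `π` onto `U^cop`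
splitting `i(m) = m ⊗ 1` if and only if there is a bialgebra morphism `γ : V → U^cop`
satisfying `γ(y) m = ρ⁻¹(m₁, y₃) ρ(m₃, y₁) m₂ γ(y₂)`. -/
theorem statement6 {k U V : Type*} [Field k] [Ring U] [Ring V]
    [Bialgebra k U] [Bialgebra k V]
    (p pinv : U →ₗ[k] V →ₗ[k] k)
    (hp1 : ∀ (m n : U) (x : V), p (m * n) x = conv (p m) (p n) x)
    (hp2 : ∀ (m : U) (x y : V), p m (x * y) = conv (p.flip x) (p.flip y) m)
    (hp3 : ∀ x : V, p 1 x = Coalgebra.counit x)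
    (hp4 : ∀ m : U, p m 1 = Coalgebra.counit m)
    (hpinv1 : convCop (TensorProduct.lift p) (TensorProduct.lift pinv) =
      LinearMap.mul' k k ∘ₗ TensorProduct.map Coalgebra.counit Coalgebra.counit)
    (hpinv2 : convCop (TensorProduct.lift pinv) (TensorProduct.lift p) =
      LinearMap.mul' k k ∘ₗ TensorProduct.map Coalgebra.counit Coalgebra.counit)
    -- `mD` is the multiplication of the generalized quantum double `D(U^cop, V)`:
    -- `(m ⊗ x)(n ⊗ y) = ⟨n₃, x₁⟩ ⟨S⁻¹(n₁), x₃⟩ m n₂ ⊗ x₂ y`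
    (mD : U ⊗[k] V →ₗ[k] U ⊗[k] V →ₗ[k] U ⊗[k] V)
    (hmD : ∀ (m : U) (x : V) (n : U) (y : V)
      {ιn : Type*} {κn : ιn → Type*} {ιx : Type*} {κx : ιx → Type*}
      (rn : Coalgebra.Repr k n ιn) (rn' : ∀ i : rn.ι, Coalgebra.Repr k (rn.left i) (κn i))
      (rx : Coalgebra.Repr k x ιx) (rx' : ∀ a : rx.ι, Coalgebra.Repr k (rx.left a) (κx a)),
      mD (m ⊗ₜ[k] x) (n ⊗ₜ[k] y) =
        ∑ i ∈ rn.index, ∑ a ∈ rx.index, ∑ j ∈ (rn' i).index, ∑ b ∈ (rx' a).index,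
          (p (rn.right i) ((rx' a).left b) * pinv ((rn' i).left j) (rx.right a)) •
            ((m * (rn' i).right j) ⊗ₜ[k] ((rx' a).right b * y))) :
    -- there is a bialgebra projection π : D(U^cop, V) → U^cop splitting i ...
    ((∃ π : U ⊗[k] V →ₗ[k] U,
        (∀ a b : U ⊗[k] V, π (mD a b) = π a * π b) ∧
        π ((1 : U) ⊗ₜ[k] (1 : V)) = 1 ∧
        ((TensorProduct.comm k U U).toLinearMap ∘ₗ Coalgebra.comul) ∘ₗ π =
          TensorProduct.map π π ∘ₗ comulCop ∧
        (Coalgebra.counit (R := k) (A := U)) ∘ₗ π =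
          LinearMap.mul' k k ∘ₗ TensorProduct.map Coalgebra.counit Coalgebra.counit ∧
        (∀ m : U, π (m ⊗ₜ[k] (1 : V)) = m)) ↔
    -- ... iff there is a bialgebra morphism γ : V → U^cop with the stated property
      (∃ γ : V →ₗ[k] U,
        (∀ x y : V, γ (x * y) = γ x * γ y) ∧
        γ 1 = 1 ∧
        ((TensorProduct.comm k U U).toLinearMap ∘ₗ Coalgebra.comul) ∘ₗ γ =
          TensorProduct.map γ γ ∘ₗ Coalgebra.comul ∧
        (Coalgebra.counit (R := k) (A := U)) ∘ₗ γ = Coalgebra.counit ∧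
        (∀ (y : V) (m : U)
          {ιm : Type*} {κm : ιm → Type*} {ιy : Type*} {κy : ιy → Type*}
          (rm : Coalgebra.Repr k m ιm) (rm' : ∀ i : rm.ι, Coalgebra.Repr k (rm.left i) (κm i))
          (ry : Coalgebra.Repr k y ιy) (ry' : ∀ a : ry.ι, Coalgebra.Repr k (ry.left a) (κy a)),
          γ y * m =
            ∑ i ∈ rm.index, ∑ a ∈ ry.index, ∑ j ∈ (rm' i).index, ∑ b ∈ (ry' a).index,
              (pinv ((rm' i).left j) (ry.right a) * p (rm.right i) ((ry' a).left b)) •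
                ((rm' i).right j * γ ((ry' a).right b))))) :=
  statement6_general p pinv hp3 hpinv1 mD hmD
end
end

section
/- In M_q(N), the bialgebra with generators x_{ij} (1 ≤ i,j ≤ N) and relations x_{im}x_{in} = q x_{in}x_{im} (n < m), x_{jm}x_{im} = q x_{im}x_{jm} (i < j), x_{jn}x_{im} = x_{im}x_{jn} (i < j, n < m), x_{jm}x_{in} − x_{in}x_{jm} = (q − q⁻¹)x_{im}x_{jn} (i < j, n < m), with comatrix coalgebra structure Δ(x_{ij}) = Σ_k x_{ik} ⊗ x_{kj} and ε(x_{ij}) = δ_{ij}: the bilinear form σ defined on generators by σ(x_{ii}, x_{ii}) = zq, σ(x_{ii}, x_{jj}) = z for i ≠ j, σ(x_{ij}, x_{ji}) = z(q − q⁻¹) for i < j, and 0 otherwise (where z^N = q⁻¹), extended as a skew pairing, satisfies σ(det_q, x) = σ(x, det_q) = ε(x) for all x ∈ M_q(N), where det_q = Σ_{p ∈ S_N} (−q)^{−l(p)} x_{1p(1)}⋯x_{Np(N)}. -/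
/-!
`det_q` is group-like. Indeed `Δ(det_q) = Σ_f x_{1f(1)} ⋯ x_{Nf(N)} ⊗ D(f)`, where `D(f)` is the
q-determinant with rows `f(1), …, f(N)`; by the relations of `M_q(N)`, `D(f)` vanishes when two
adjacent rows coincide and is multiplied by `−q` when two adjacent rows in decreasing order are
put in increasing order. Hence `D(f) = 0` for non-injective `f` and `D(τ) = (−q)^{−l(τ)} det_q`
for permutations `τ`, which gives `Δ(det_q) = det_q ⊗ det_q`.

For group-like `g`, the skew pairing axioms make `σ(g, −)` and `σ(−, g)` characters of `M_q(N)`,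
so it suffices to compare them with `ε` on the generators. The maps `a ↦ (σ(a, x_{st}))_{s,t}` and
`a ↦ (σ(x_{ts}, a))_{s,t}` are algebra maps into matrices; they kill the generators below
(resp. above) the diagonal and send `x_{ll}` to `z · diag(1, …, q, …, 1)` (with `q` in place `l`).
So only the diagonal term of `det_q` survives, and it is sent to `z^N q = 1`.
-/

open TensorProduct Coalgebra

noncomputable section

/-- The number of inversions `l(p)` of a permutation of `Fin N`. -/
def inversions {N : ℕ} (p : Equiv.Perm (Fin N)) : ℕ :=
  (Finset.univ.filter fun ij : Fin N × Fin N => ij.1 < ij.2 ∧ p ij.2 < p ij.1).card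

/-- The quantum determinant `det_q = Σ_p (−q)^{−l(p)} x_{1 p(1)} ⋯ x_{N p(N)}`. -/
def detq {k H : Type*} [Field k] [Ring H] [Algebra k H]
    (q : k) (N : ℕ) (x : Fin N → Fin N → H) : H :=
  ∑ p : Equiv.Perm (Fin N),
    (((-q) ^ inversions p)⁻¹ : k) • ((List.finRange N).map fun i => x i (p i)).prod

theorem Equiv.Perm.exists_apply_lt_of_ne_one {α : Type*} [LinearOrder α] [Finite α]
    {p : Equiv.Perm α} (hp : p ≠ 1) : ∃ i, p i < i := by
  -- Otherwise the orbit of a moved point `i` climbs above `i` and never comes back.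
  by_contra! h
  obtain ⟨i, hi⟩ : ∃ i, p i ≠ i := by
    by_contra! h'
    exact hp (Equiv.ext h')
  have hle : ∀ n : ℕ, p i ≤ (p ^ n) (p i) := by
    intro n
    induction n with
    | zero => rfl
    | succ n ih => rw [pow_succ', Equiv.Perm.mul_apply]; exact ih.trans (h _)
  obtain ⟨n, hn⟩ : ∃ n, n + 1 = orderOf p :=
    ⟨orderOf p - 1, Nat.sub_add_cancel (orderOf_pos p)⟩
  have hcycle : (p ^ n) (p i) = i := by
    rw [← Equiv.Perm.mul_apply, ← pow_succ, hn, pow_orderOf_eq_one, Equiv.Perm.one_apply]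
  exact hi (le_antisymm ((hle n).trans_eq hcycle) (h i))

theorem Equiv.Perm.exists_lt_apply_of_ne_one {α : Type*} [LinearOrder α] [Finite α]
    {p : Equiv.Perm α} (hp : p ≠ 1) : ∃ i, i < p i := by
  obtain ⟨j, hj⟩ := Equiv.Perm.exists_apply_lt_of_ne_one (inv_ne_one.mpr hp)
  exact ⟨p⁻¹ j, by simpa using hj⟩

theorem Fin.exists_adjacent_le_of_not_strictMono {N : ℕ} {α : Type*} [LinearOrder α]
    {f : Fin N → α} (hf : ¬ StrictMono f) : ∃ i j : Fin N, (j : ℕ) = i + 1 ∧ f j ≤ f i := by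
  obtain _ | n := N
  · exact absurd (fun i => i.elim0) hf
  · rw [Fin.strictMono_iff_lt_succ] at hf
    push Not at hf
    obtain ⟨i, hi⟩ := hf
    exact ⟨i.castSucc, i.succ, rfl, hi⟩

theorem Fin.swap_lt_swap_iff_of_adjacent {N : ℕ} {i j u v : Fin N} (hij : (j : ℕ) = i + 1)
    (hij' : (u, v) ≠ (i, j)) (hji : (u, v) ≠ (j, i)) :
    Equiv.swap i j u < Equiv.swap i j v ↔ u < v := by
  simp only [ne_eq, Prod.mk.injEq, Fin.ext_iff] at hij' hji
  simp only [Equiv.swap_apply_def, Fin.lt_def, Fin.ext_iff]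
  split_ifs <;> omega

theorem Equiv.Perm.sum_eq_sum_filter_lt_add_mul_swap {α M : Type*} [LinearOrder α] [Fintype α]
    [AddCommMonoid M] (g : Equiv.Perm α → M) {i j : α} (hij : i ≠ j) :
    ∑ p, g p = ∑ p with p i < p j, (g p + g (p * Equiv.swap i j)) := by
  rw [Finset.sum_add_distrib, ← Finset.sum_filter_add_sum_filter_not Finset.univ
    (fun p : Equiv.Perm α => p i < p j)]
  congr 1
  refine (Finset.sum_equiv (Equiv.mulRight (Equiv.swap i j)) (fun p => ?_) fun _ _ => rfl).symm
  simp only [Finset.mem_filter, Finset.mem_univ, true_and, Equiv.coe_mulRight,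
    Equiv.Perm.mul_apply, Equiv.swap_apply_left, Equiv.swap_apply_right, not_lt]
  exact ⟨le_of_lt, fun h => h.lt_of_ne (p.injective.ne hij)⟩

theorem List.prod_ofFn_eq_take_mul_mul_drop {M : Type*} [Monoid M] {N : ℕ} (F G : Fin N → M)
    {i j : Fin N} (hij : (j : ℕ) = i + 1) (hFG : ∀ l, l ≠ i → l ≠ j → G l = F l) :
    (List.ofFn G).prod =
      ((List.ofFn F).take i).prod * (G i * G j) * ((List.ofFn F).drop (j + 1)).prod := by
  have htake : (List.ofFn G).take i = (List.ofFn F).take i :=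
    List.ext_getElem (by simp) fun l h _ => by
      simp only [List.length_take, List.length_ofFn] at h
      simp only [List.getElem_take, List.getElem_ofFn]
      exact hFG _ (by simp [Fin.ext_iff]; omega) (by simp [Fin.ext_iff]; omega)
  have hdrop : (List.ofFn G).drop (j + 1) = (List.ofFn F).drop (j + 1) :=
    List.ext_getElem (by simp) fun l _ _ => by
      simp only [List.getElem_drop, List.getElem_ofFn]
      exact hFG _ (by simp [Fin.ext_iff]; omega) (by simp [Fin.ext_iff]; omega)
  have hmid : (List.ofFn G).drop i = G i :: G j :: (List.ofFn G).drop (j + 1) := by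
    rw [List.drop_eq_getElem_cons (by simp), List.drop_eq_getElem_cons (by simp; omega)]
    simp [← hij]
  rw [← List.take_append_drop i (List.ofFn G), hmid, htake, hdrop]
  simp [List.prod_append, mul_assoc]

theorem Equiv.Perm.sum_coe_eq_sum_filter_injective {α M : Type*} [Fintype α] [DecidableEq α]
    [AddCommMonoid M] (F : (α → α) → M) :
    ∑ p : Equiv.Perm α, F p = ∑ f with Function.Injective f, F f :=
  Finset.sum_bij (fun p _ => ⇑p) (fun p _ => by simp [p.injective])
    (fun _ _ _ _ h => DFunLike.coe_injective h)
    (fun f hf => ⟨Equiv.ofBijective f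
      (Finite.injective_iff_bijective.mp (Finset.mem_filter.mp hf).2), Finset.mem_univ _, rfl⟩)
    (fun _ _ => rfl)

theorem conv_apply_of_comul_eq_sum {k C : Type*} [CommRing k] [AddCommGroup C] [Module k C]
    [CoalgebraStruct k C] {N : ℕ} {x : Fin N → Fin N → C}
    (hcomul : ∀ i j : Fin N, comul (R := k) (x i j) = ∑ l : Fin N, x i l ⊗ₜ[k] x l j)
    (φ ψ : C →ₗ[k] k) (s t : Fin N) :
    conv φ ψ (x s t) = ∑ l, φ (x s l) * ψ (x l t) := by
  simp [conv, hcomul]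

theorem conv_apply_of_isGroupLikeElem {k C : Type*} [CommRing k] [AddCommGroup C] [Module k C]
    [Coalgebra k C] {g : C} (hg : IsGroupLikeElem k g) (φ ψ : C →ₗ[k] k) :
    conv φ ψ g = φ g * ψ g := by
  simp [conv, hg.comul_eq_tmul_self]

theorem Bialgebra.eq_counit_of_adjoin_eq_top {k H : Type*} [CommRing k] [Ring H] [Bialgebra k H]
    {s : Set H} (hs : Algebra.adjoin k s = ⊤) (φ : H →ₗ[k] k) (hone : φ 1 = 1)
    (hmul : ∀ a b, φ (a * b) = φ a * φ b) (hφs : ∀ a ∈ s, φ a = counit a) (a : H) :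
    φ a = counit a :=
  DFunLike.congr_fun (AlgHom.ext_of_adjoin_eq_top hs (φ₁ := AlgHom.ofLinearMap φ hone hmul)
    (φ₂ := Bialgebra.counitAlgHom k H) hφs) a

def inversionSet {α : Type*} [LinearOrder α] {N : ℕ} (f : Fin N → α) : Finset (Fin N × Fin N) :=
  Finset.univ.filter fun ij => ij.1 < ij.2 ∧ f ij.2 < f ij.1

-- `inversions p` is definitionally `inversionCount ⇑p`.
def inversionCount {α : Type*} [LinearOrder α] {N : ℕ} (f : Fin N → α) : ℕ :=
  (inversionSet f).card

theorem inversionCount_id (N : ℕ) : inversionCount (id : Fin N → Fin N) = 0 := by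
  simp only [inversionCount, inversionSet, id, Finset.card_eq_zero, Finset.filter_eq_empty_iff]
  exact fun _ _ h => lt_asymm h.1 h.2

theorem inversions_one (N : ℕ) : inversions (1 : Equiv.Perm (Fin N)) = 0 :=
  inversionCount_id N

theorem inversionSet_comp_swap {α : Type*} [LinearOrder α] {N : ℕ} {f : Fin N → α}
    {i j : Fin N} (hij : (j : ℕ) = i + 1) (hf : f i < f j) :
    inversionSet (f ∘ Equiv.swap i j) =
      insert (i, j) ((inversionSet f).map (Equiv.prodCongr (Equiv.swap i j) (Equiv.swap i j))) := by
  have hlt : i < j := Fin.lt_def.mpr (by omega)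
  ext ⟨u, v⟩
  simp only [inversionSet, Finset.mem_insert, Finset.mem_map_equiv, Finset.mem_filter,
    Finset.mem_univ, true_and, Equiv.prodCongr_symm, Equiv.prodCongr_apply, Prod.map,
    Equiv.symm_swap, Function.comp_apply]
  by_cases h1 : (u, v) = (i, j)
  · simp_all [Equiv.swap_apply_left, Equiv.swap_apply_right]
  by_cases h2 : (u, v) = (j, i)
  · obtain ⟨rfl, rfl⟩ := Prod.mk.inj h2
    simp [Equiv.swap_apply_left, Equiv.swap_apply_right, hf.asymm, hlt.asymm, h1]
  rw [Fin.swap_lt_swap_iff_of_adjacent hij h1 h2]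
  simp [h1]

theorem inversionCount_comp_swap {α : Type*} [LinearOrder α] {N : ℕ} {f : Fin N → α}
    {i j : Fin N} (hij : (j : ℕ) = i + 1) (hf : f i < f j) :
    inversionCount (f ∘ Equiv.swap i j) = inversionCount f + 1 := by
  have hlt : i < j := Fin.lt_def.mpr (by omega)
  rw [inversionCount, inversionSet_comp_swap hij hf, Finset.card_insert_of_notMem,
    Finset.card_map, inversionCount]
  simp [inversionSet, Finset.mem_map_equiv, Equiv.swap_apply_left, Equiv.swap_apply_right,
    hlt.asymm]

namespace QuantumMatrix

open Equiv

section RowDeterminant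

variable {k H : Type*} [Field k] [Ring H] [Algebra k H] {N : ℕ} (q : k) (x : Fin N → Fin N → H)

def monomial {n : ℕ} (r c : Fin n → Fin N) : H :=
  (List.ofFn fun l => x (r l) (c l)).prod

def rowDet (f : Fin N → Fin N) : H :=
  ∑ p : Perm (Fin N), ((-q) ^ inversions p)⁻¹ • monomial x f p

def qMinor (r r' c c' : Fin N) : H :=
  x r c * x r' c' - q⁻¹ • (x r c' * x r' c)

theorem rowDet_id : rowDet q x id = detq q N x := by
  simp only [rowDet, detq, monomial, List.ofFn_eq_map, id]

theorem rowDet_eq_sum_qMinor {i j : Fin N} (hij : (j : ℕ) = i + 1) {f g : Fin N → Fin N}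
    (hfg : ∀ l, l ≠ i → l ≠ j → g l = f l) :
    rowDet q x g = ∑ p with p i < p j, ((-q) ^ inversions p)⁻¹ •
      (((List.ofFn fun l => x (f l) (p l)).take i).prod * qMinor q x (g i) (g j) (p i) (p j) *
        ((List.ofFn fun l => x (f l) (p l)).drop (j + 1)).prod) := by
  have hne : i ≠ j := fun h => by simp [h] at hij
  rw [rowDet, Perm.sum_eq_sum_filter_lt_add_mul_swap _ hne]
  refine Finset.sum_congr rfl fun p hp => ?_
  have hpij : p i < p j := (Finset.mem_filter.mp hp).2
  have hinv : inversions (p * swap i j) = inversions p + 1 :=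
    inversionCount_comp_swap hij hpij
  have hmono : monomial x g p = ((List.ofFn fun l => x (f l) (p l)).take i).prod *
      (x (g i) (p i) * x (g j) (p j)) * ((List.ofFn fun l => x (f l) (p l)).drop (j + 1)).prod :=
    List.prod_ofFn_eq_take_mul_mul_drop _ (fun l => x (g l) (p l)) hij fun l hi hj => by
      rw [hfg l hi hj]
  have hmono_swap : monomial x g ⇑(p * swap i j) =
      ((List.ofFn fun l => x (f l) (p l)).take i).prod * (x (g i) (p j) * x (g j) (p i)) *
        ((List.ofFn fun l => x (f l) (p l)).drop (j + 1)).prod := by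
    have := List.prod_ofFn_eq_take_mul_mul_drop (fun l => x (f l) (p l))
      (fun l => x (g l) (p (swap i j l))) hij fun l hi hj => by
        rw [swap_apply_of_ne_of_ne hi hj, hfg l hi hj]
    rwa [swap_apply_left, swap_apply_right] at this
  rw [hmono, hmono_swap, hinv, qMinor, pow_succ, mul_inv_rev, inv_neg]
  simp only [mul_sub, sub_mul, mul_smul_comm, smul_mul_assoc, smul_sub, mul_assoc]
  module

variable {q x}

theorem qMinor_self (hq : q ≠ 0)
    (hrel1 : ∀ (i m n : Fin N), n < m → x i m * x i n = q • (x i n * x i m))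
    {r c c' : Fin N} (hc : c < c') : qMinor q x r r c c' = 0 := by
  rw [qMinor, hrel1 r c' c hc, smul_smul, inv_mul_cancel₀ hq, one_smul, sub_self]

theorem qMinor_swap (hq : q ≠ 0)
    (hrel3 : ∀ (i j m n : Fin N), i < j → n < m → x j n * x i m = x i m * x j n)
    (hrel4 : ∀ (i j m n : Fin N), i < j → n < m →
      x j m * x i n - x i n * x j m = (q - q⁻¹) • (x i m * x j n))
    {r r' c c' : Fin N} (hr : r' < r) (hc : c < c') :
    qMinor q x r r' c c' = (-q)⁻¹ • qMinor q x r' r c c' := by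
  rw [qMinor, qMinor, hrel3 r' r c' c hr hc, eq_add_of_sub_eq (hrel4 r' r c' c hr hc), inv_neg]
  match_scalars
  · field_simp
    ring
  · field_simp

theorem rowDet_eq_zero_of_eq (hq : q ≠ 0)
    (hrel1 : ∀ (i m n : Fin N), n < m → x i m * x i n = q • (x i n * x i m))
    {i j : Fin N} (hij : (j : ℕ) = i + 1) {f : Fin N → Fin N} (hf : f i = f j) :
    rowDet q x f = 0 := by
  rw [rowDet_eq_sum_qMinor q x hij (fun _ _ _ => rfl)]
  refine Finset.sum_eq_zero fun p hp => ?_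
  rw [hf, qMinor_self hq hrel1 (Finset.mem_filter.mp hp).2, mul_zero, zero_mul, smul_zero]

theorem rowDet_eq_inv_smul_comp_swap (hq : q ≠ 0)
    (hrel3 : ∀ (i j m n : Fin N), i < j → n < m → x j n * x i m = x i m * x j n)
    (hrel4 : ∀ (i j m n : Fin N), i < j → n < m →
      x j m * x i n - x i n * x j m = (q - q⁻¹) • (x i m * x j n))
    {i j : Fin N} (hij : (j : ℕ) = i + 1) {f : Fin N → Fin N} (hf : f j < f i) :
    rowDet q x f = (-q)⁻¹ • rowDet q x (f ∘ swap i j) := by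
  rw [rowDet_eq_sum_qMinor q x hij (fun _ _ _ => rfl),
    rowDet_eq_sum_qMinor q x hij (f := f) fun l hi hj => by simp [swap_apply_of_ne_of_ne hi hj],
    Finset.smul_sum]
  refine Finset.sum_congr rfl fun p hp => ?_
  simp only [Function.comp_apply, swap_apply_left, swap_apply_right,
    qMinor_swap hq hrel3 hrel4 hf (Finset.mem_filter.mp hp).2, mul_smul_comm, smul_mul_assoc]
  rw [smul_comm]

theorem rowDet_eq_ite (hq : q ≠ 0)
    (hrel1 : ∀ (i m n : Fin N), n < m → x i m * x i n = q • (x i n * x i m))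
    (hrel3 : ∀ (i j m n : Fin N), i < j → n < m → x j n * x i m = x i m * x j n)
    (hrel4 : ∀ (i j m n : Fin N), i < j → n < m →
      x j m * x i n - x i n * x j m = (q - q⁻¹) • (x i m * x j n))
    (f : Fin N → Fin N) :
    rowDet q x f =
      if Function.Injective f then ((-q) ^ inversionCount f)⁻¹ • rowDet q x id else 0 := by
  induction hn : inversionCount f using Nat.strong_induction_on generalizing f with
  | _ n ih =>
  by_cases hmono : StrictMono f
  · rw [hmono.eq_id, ← hn, hmono.eq_id, inversionCount_id, if_pos Function.injective_id,
      pow_zero, inv_one, one_smul]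
  obtain ⟨i, j, hij, hle⟩ := Fin.exists_adjacent_le_of_not_strictMono hmono
  obtain hlt | heq := hle.lt_or_eq
  · have hcount : inversionCount (f ∘ swap i j) + 1 = n := by
      rw [← hn, ← inversionCount_comp_swap hij (f := f ∘ swap i j) (by simpa using hlt)]
      simp [Function.comp_def]
    rw [rowDet_eq_inv_smul_comp_swap hq hrel3 hrel4 hij hlt, ih _ (by omega) _ rfl]
    simp only [(swap i j).injective_comp]
    split_ifs
    · rw [smul_smul, ← hcount, pow_succ, mul_inv_rev]
    · rw [smul_zero]
  · have hne : i ≠ j := fun h => by simp [h] at hij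
    rw [rowDet_eq_zero_of_eq hq hrel1 hij heq.symm, if_neg fun hf => hne (hf heq.symm)]

end RowDeterminant

section Coalgebra

variable {k H : Type*} [Field k] [Ring H] [Bialgebra k H] {N : ℕ} {x : Fin N → Fin N → H}

theorem comul_monomial
    (hcomul : ∀ i j : Fin N, comul (R := k) (x i j) = ∑ l : Fin N, x i l ⊗ₜ[k] x l j)
    {n : ℕ} (r c : Fin n → Fin N) :
    comul (R := k) (monomial x r c) = ∑ f : Fin n → Fin N, monomial x r f ⊗ₜ monomial x f c := by
  induction n with
  | zero => simp [monomial, Algebra.TensorProduct.one_def]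
  | succ n ih =>
    rw [monomial, List.ofFn_succ, List.prod_cons, Bialgebra.comul_mul, hcomul, ← monomial,
      ih, Finset.sum_mul_sum, ← Fintype.sum_prod_type',
      ← (Fin.consEquiv fun _ => Fin N).sum_comp]
    refine Fintype.sum_congr _ _ fun _ => ?_
    simp [monomial, List.ofFn_succ, Algebra.TensorProduct.tmul_mul_tmul]

theorem counit_monomial
    (hcounit : ∀ i j : Fin N, counit (R := k) (x i j) = if i = j then (1 : k) else 0)
    {n : ℕ} (r c : Fin n → Fin N) :
    counit (R := k) (monomial x r c) = if r = c then 1 else 0 := by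
  rw [monomial, ← Bialgebra.counitAlgHom_apply, map_list_prod, List.map_ofFn, List.prod_ofFn]
  simp [hcounit, Fintype.prod_boole, funext_iff]

theorem isGroupLikeElem_detq {q : k} (hq : q ≠ 0)
    (hrel1 : ∀ (i m n : Fin N), n < m → x i m * x i n = q • (x i n * x i m))
    (hrel3 : ∀ (i j m n : Fin N), i < j → n < m → x j n * x i m = x i m * x j n)
    (hrel4 : ∀ (i j m n : Fin N), i < j → n < m →
      x j m * x i n - x i n * x j m = (q - q⁻¹) • (x i m * x j n))
    (hcomul : ∀ i j : Fin N, comul (R := k) (x i j) = ∑ l : Fin N, x i l ⊗ₜ[k] x l j)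
    (hcounit : ∀ i j : Fin N, counit (R := k) (x i j) = if i = j then (1 : k) else 0) :
    IsGroupLikeElem k (detq q N x) := by
  rw [← rowDet_id]
  constructor
  · simp only [rowDet, map_sum, map_smul, counit_monomial hcounit, smul_eq_mul, mul_ite,
      mul_one, mul_zero, ← Perm.coe_one, DFunLike.coe_fn_eq, Fintype.sum_ite_eq]
    rw [inversions_one, pow_zero, inv_one]
  · calc comul (R := k) (rowDet q x id)
        = ∑ f : Fin N → Fin N, monomial x id f ⊗ₜ rowDet q x f := by
          simp only [rowDet, map_sum, map_smul, comul_monomial hcomul, Finset.smul_sum,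
            TensorProduct.tmul_sum, TensorProduct.tmul_smul]
          exact Finset.sum_comm
      _ = ∑ f with Function.Injective f,
            (((-q) ^ inversionCount f)⁻¹ • monomial x id f) ⊗ₜ rowDet q x id := by
          rw [Finset.sum_filter]
          refine Fintype.sum_congr _ _ fun f => ?_
          rw [rowDet_eq_ite hq hrel1 hrel3 hrel4]
          split_ifs <;> simp [TensorProduct.smul_tmul]
      _ = rowDet q x id ⊗ₜ rowDet q x id := by
          rw [← Perm.sum_coe_eq_sum_filter_injective, ← TensorProduct.sum_tmul]
          rfl

end Coalgebra

section Representation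

open Matrix

variable {k H A : Type*} [Field k] [Ring H] [Algebra k H] [Semiring A] [Algebra k A] {N : ℕ}
  {x : Fin N → Fin N → H}

theorem map_detq_eq_prod_diagonal (q : k) (φ : H →ₐ[k] A)
    (hφ : ∀ p : Perm (Fin N), p ≠ 1 → ∃ l, φ (x l (p l)) = 0) :
    φ (detq q N x) = (List.ofFn fun l => φ (x l l)).prod := by
  rw [← rowDet_id, rowDet, map_sum, Finset.sum_eq_single 1]
  · simp [inversions_one, monomial, map_list_prod, List.map_ofFn, Function.comp_def]
  · intro p _ hp
    obtain ⟨l, hl⟩ := hφ p hp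
    rw [map_smul, monomial, map_list_prod, List.map_ofFn, List.prod_eq_zero, smul_zero]
    exact List.mem_ofFn.mpr ⟨l, hl⟩
  · simp

theorem matrix_map_detq_eq_one {q z : k} (hq : q ≠ 0) (hz : z ^ N = q⁻¹)
    (φ : H →ₐ[k] Matrix (Fin N) (Fin N) k)
    (hφ : ∀ p : Perm (Fin N), p ≠ 1 → ∃ l, φ (x l (p l)) = 0)
    (hdiag : ∀ l, φ (x l l) = diagonal fun s => z * if s = l then q else 1) :
    φ (detq q N x) = 1 := by
  rw [map_detq_eq_prod_diagonal q φ hφ]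
  set d : Fin N → Fin N → k := fun l s => z * if s = l then q else 1
  have hd : ∀ s, ∏ l, d l s = 1 := fun s => by
    rw [Finset.prod_mul_distrib, Finset.prod_const, Finset.card_univ, Fintype.card_fin, hz,
      Finset.prod_ite_eq Finset.univ s, if_pos (Finset.mem_univ s), inv_mul_cancel₀ hq]
  calc (List.ofFn fun l => φ (x l l)).prod
      = diagonalRingHom (Fin N) k (List.ofFn d).prod := by
        rw [map_list_prod, List.map_ofFn]
        simp [hdiag, d, Function.comp_def]
    _ = 1 := by
        rw [List.prod_ofFn, diagonalRingHom_apply, Finset.prod_fn]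
        simp [hd]

end Representation

section Pairing

open Matrix

variable {k H : Type*} [Field k] [Ring H] [Bialgebra k H] {σ : H →ₗ[k] H →ₗ[k] k}

theorem pairing_left_eq_counit_of_isGroupLikeElem
    (hσ2 : ∀ c a b : H, σ c (a * b) = conv (σ.flip b) (σ.flip a) c)
    (hσ_one : ∀ h : H, σ h 1 = counit h) {g : H} (hg : IsGroupLikeElem k g)
    {s : Set H} (hs : Algebra.adjoin k s = ⊤) (hgs : ∀ a ∈ s, σ g a = counit a) (a : H) :
    σ g a = counit a :=
  Bialgebra.eq_counit_of_adjoin_eq_top hs (σ g) (by rw [hσ_one, hg.counit_eq_one])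
    (fun a b => by rw [hσ2, conv_apply_of_isGroupLikeElem hg, mul_comm]; rfl) hgs a

theorem pairing_right_eq_counit_of_isGroupLikeElem
    (hσ1 : ∀ a b c : H, σ (a * b) c = conv (σ a) (σ b) c)
    (hσ_one : ∀ h : H, σ 1 h = counit h) {g : H} (hg : IsGroupLikeElem k g)
    {s : Set H} (hs : Algebra.adjoin k s = ⊤) (hgs : ∀ a ∈ s, σ a g = counit a) (a : H) :
    σ a g = counit a :=
  Bialgebra.eq_counit_of_adjoin_eq_top hs (σ.flip g) (by simp [hσ_one, hg.counit_eq_one])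
    (fun a b => by simp [hσ1, conv_apply_of_isGroupLikeElem hg]) hgs a

variable {N : ℕ} {x : Fin N → Fin N → H} {q z : k}

theorem pairing_diagonal_generators (hσv1 : ∀ i : Fin N, σ (x i i) (x i i) = z * q)
    (hσv2 : ∀ i j : Fin N, i ≠ j → σ (x i i) (x j j) = z) (i j : Fin N) :
    σ (x i i) (x j j) = z * if j = i then q else 1 := by
  split_ifs with hji
  · rw [hji, hσv1]
  · rw [hσv2 i j (Ne.symm hji), mul_one]

theorem pairing_detq_generator (hq : q ≠ 0) (hz : z ^ N = q⁻¹)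
    (hσ1 : ∀ a b c : H, σ (a * b) c = conv (σ a) (σ b) c)
    (hσ_one : ∀ h : H, σ 1 h = counit h)
    (hcomul : ∀ i j : Fin N, comul (R := k) (x i j) = ∑ l : Fin N, x i l ⊗ₜ[k] x l j)
    (hcounit : ∀ i j : Fin N, counit (R := k) (x i j) = if i = j then (1 : k) else 0)
    (hσv1 : ∀ i : Fin N, σ (x i i) (x i i) = z * q)
    (hσv2 : ∀ i j : Fin N, i ≠ j → σ (x i i) (x j j) = z)
    (hσv4 : ∀ i j s t : Fin N, ¬(i = j ∧ s = t) → ¬(i < j ∧ s = j ∧ t = i) →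
      σ (x i j) (x s t) = 0)
    (s t : Fin N) :
    σ (detq q N x) (x s t) = counit (x s t) := by
  let ρ : H →ₐ[k] Matrix (Fin N) (Fin N) k :=
    AlgHom.ofLinearMap (LinearMap.pi fun s => LinearMap.pi fun t => σ.flip (x s t))
      (by ext s t; exact (hσ_one _).trans (hcounit s t))
      (fun a b => by ext s t; exact (hσ1 a b _).trans (conv_apply_of_comul_eq_sum hcomul _ _ s t))
  have hρ : ∀ a s t, ρ a s t = σ a (x s t) := fun _ _ _ => rfl
  have hlower : ∀ i j, j < i → ρ (x i j) = 0 := fun i j hij => by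
    ext s t
    exact hσv4 i j s t (fun h => hij.ne' h.1) (fun h => hij.asymm h.1)
  have hdiag : ∀ l, ρ (x l l) = diagonal fun s => z * if s = l then q else 1 := fun l => by
    ext s t
    rw [hρ, diagonal_apply]
    by_cases hst : s = t
    · rw [← hst, if_pos rfl, pairing_diagonal_generators hσv1 hσv2]
    · rw [if_neg hst]
      exact hσv4 l l s t (fun h => hst h.2) (fun h => lt_irrefl _ h.1)
  have hdet := matrix_map_detq_eq_one hq hz ρ
    (fun p hp => (Perm.exists_apply_lt_of_ne_one hp).imp fun l hl => hlower l (p l) hl) hdiag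
  rw [← hρ, hdet, hcounit, one_apply]

theorem pairing_generator_detq (hq : q ≠ 0) (hz : z ^ N = q⁻¹)
    (hσ2 : ∀ c a b : H, σ c (a * b) = conv (σ.flip b) (σ.flip a) c)
    (hσ_one : ∀ h : H, σ h 1 = counit h)
    (hcomul : ∀ i j : Fin N, comul (R := k) (x i j) = ∑ l : Fin N, x i l ⊗ₜ[k] x l j)
    (hcounit : ∀ i j : Fin N, counit (R := k) (x i j) = if i = j then (1 : k) else 0)
    (hσv1 : ∀ i : Fin N, σ (x i i) (x i i) = z * q)
    (hσv2 : ∀ i j : Fin N, i ≠ j → σ (x i i) (x j j) = z)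
    (hσv4 : ∀ i j s t : Fin N, ¬(i = j ∧ s = t) → ¬(i < j ∧ s = j ∧ t = i) →
      σ (x i j) (x s t) = 0)
    (s t : Fin N) :
    σ (x s t) (detq q N x) = counit (x s t) := by
  let ρ : H →ₐ[k] Matrix (Fin N) (Fin N) k :=
    AlgHom.ofLinearMap (LinearMap.pi fun s => LinearMap.pi fun t => σ (x t s))
      (by ext s t; exact (hσ_one _).trans ((hcounit t s).trans (by simp [one_apply, eq_comm])))
      (fun a b => by
        ext s t
        refine (hσ2 _ a b).trans ((conv_apply_of_comul_eq_sum hcomul _ _ t s).trans ?_)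
        exact Finset.sum_congr rfl fun _ _ => mul_comm _ _)
  have hρ : ∀ a s t, ρ a s t = σ (x t s) a := fun _ _ _ => rfl
  have hupper : ∀ i j, i < j → ρ (x i j) = 0 := fun i j hij => by
    ext s t
    exact hσv4 t s i j (fun h => hij.ne h.2) (fun h => hij.asymm (h.2.1 ▸ h.2.2 ▸ h.1))
  have hdiag : ∀ l, ρ (x l l) = diagonal fun s => z * if s = l then q else 1 := fun l => by
    ext s t
    rw [hρ, diagonal_apply]
    by_cases hst : s = t
    · rw [← hst, if_pos rfl, pairing_diagonal_generators hσv1 hσv2]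
      simp only [@eq_comm _ l s]
    · rw [if_neg hst]
      exact hσv4 t s l l (fun h => hst h.1.symm) (fun h => hst (h.2.1.symm.trans h.2.2))
  have hdet := matrix_map_detq_eq_one hq hz ρ
    (fun p hp => (Perm.exists_lt_apply_of_ne_one hp).imp fun l hl => hupper l (p l) hl) hdiag
  rw [← hρ _ t s, hdet, hcounit, one_apply]
  simp only [@eq_comm _ t s]

end Pairing

end QuantumMatrix

open QuantumMatrix

theorem statement17_general {k H : Type*} [Field k] [Ring H] [Bialgebra k H]
    (N : ℕ) (q z : k) (hq : q ≠ 0) (hz : z ^ N = q⁻¹)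
    (x : Fin N → Fin N → H)
    -- the defining relations of M_q(N)
    (hrel1 : ∀ (i m n : Fin N), n < m → x i m * x i n = q • (x i n * x i m))
    (hrel3 : ∀ (i j m n : Fin N), i < j → n < m → x j n * x i m = x i m * x j n)
    (hrel4 : ∀ (i j m n : Fin N), i < j → n < m →
      x j m * x i n - x i n * x j m = (q - q⁻¹) • (x i m * x j n))
    -- the comatrix coalgebra structure on the generators
    (hcomul : ∀ i j : Fin N,
      Coalgebra.comul (R := k) (x i j) = ∑ l : Fin N, x i l ⊗ₜ[k] x l j)
    (hcounit : ∀ i j : Fin N,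
      Coalgebra.counit (R := k) (x i j) = if i = j then (1 : k) else 0)
    -- the generators generate H as an algebra
    (hgen : Algebra.adjoin k (Set.range fun ij : Fin N × Fin N => x ij.1 ij.2) = ⊤)
    -- σ is a skew pairing
    (σ : H →ₗ[k] H →ₗ[k] k)
    (hσ1 : ∀ a b c : H, σ (a * b) c = conv (σ a) (σ b) c)
    (hσ2 : ∀ c a b : H, σ c (a * b) = conv (σ.flip b) (σ.flip a) c)
    (hσ3 : ∀ h : H, σ 1 h = Coalgebra.counit h ∧ σ h 1 = Coalgebra.counit h)
    -- values of σ on generators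
    (hσv1 : ∀ i : Fin N, σ (x i i) (x i i) = z * q)
    (hσv2 : ∀ i j : Fin N, i ≠ j → σ (x i i) (x j j) = z)
    (hσv4 : ∀ i j s t : Fin N, ¬(i = j ∧ s = t) → ¬(i < j ∧ s = j ∧ t = i) →
      σ (x i j) (x s t) = 0) :
    ∀ h : H, σ (detq q N x) h = Coalgebra.counit h ∧
      σ h (detq q N x) = Coalgebra.counit h := by
  have hdet := isGroupLikeElem_detq hq hrel1 hrel3 hrel4 hcomul hcounit
  intro h
  constructor
  · refine pairing_left_eq_counit_of_isGroupLikeElem hσ2 (fun h => (hσ3 h).2) hdet hgen ?_ h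
    rintro _ ⟨⟨s, t⟩, rfl⟩
    exact pairing_detq_generator hq hz hσ1 (fun h => (hσ3 h).1) hcomul hcounit hσv1 hσv2
      hσv4 s t
  · refine pairing_right_eq_counit_of_isGroupLikeElem hσ1 (fun h => (hσ3 h).1) hdet hgen ?_ h
    rintro _ ⟨⟨s, t⟩, rfl⟩
    exact pairing_generator_detq hq hz hσ2 (fun h => (hσ3 h).2) hcomul hcounit hσv1 hσv2
      hσv4 s t

/-- in `M_q(N)` with the skew pairing `σ` determined on generators by
`σ(x_{ii}, x_{ii}) = zq`, `σ(x_{ii}, x_{jj}) = z` (i ≠ j),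
`σ(x_{ij}, x_{ji}) = z(q − q⁻¹)` (i < j) and `0` otherwise (with `z^N = q⁻¹`), one has
`σ(det_q, h) = σ(h, det_q) = ε(h)` for all `h`. -/
theorem statement17 {k H : Type*} [Field k] [Ring H] [Bialgebra k H]
    (N : ℕ) (q z : k) (hq : q ≠ 0) (hz : z ^ N = q⁻¹)
    (x : Fin N → Fin N → H)
    -- the defining relations of M_q(N)
    (hrel1 : ∀ (i m n : Fin N), n < m → x i m * x i n = q • (x i n * x i m))
    (hrel2 : ∀ (i j m : Fin N), i < j → x j m * x i m = q • (x i m * x j m))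
    (hrel3 : ∀ (i j m n : Fin N), i < j → n < m → x j n * x i m = x i m * x j n)
    (hrel4 : ∀ (i j m n : Fin N), i < j → n < m →
      x j m * x i n - x i n * x j m = (q - q⁻¹) • (x i m * x j n))
    -- the comatrix coalgebra structure on the generators
    (hcomul : ∀ i j : Fin N,
      Coalgebra.comul (R := k) (x i j) = ∑ l : Fin N, x i l ⊗ₜ[k] x l j)
    (hcounit : ∀ i j : Fin N,
      Coalgebra.counit (R := k) (x i j) = if i = j then (1 : k) else 0)
    -- the generators generate H as an algebra
    (hgen : Algebra.adjoin k (Set.range fun ij : Fin N × Fin N => x ij.1 ij.2) = ⊤)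
    -- σ is a skew pairing
    (σ : H →ₗ[k] H →ₗ[k] k)
    (hσ1 : ∀ a b c : H, σ (a * b) c = conv (σ a) (σ b) c)
    (hσ2 : ∀ c a b : H, σ c (a * b) = conv (σ.flip b) (σ.flip a) c)
    (hσ3 : ∀ h : H, σ 1 h = Coalgebra.counit h ∧ σ h 1 = Coalgebra.counit h)
    -- values of σ on generators
    (hσv1 : ∀ i : Fin N, σ (x i i) (x i i) = z * q)
    (hσv2 : ∀ i j : Fin N, i ≠ j → σ (x i i) (x j j) = z)
    (hσv3 : ∀ i j : Fin N, i < j → σ (x i j) (x j i) = z * (q - q⁻¹))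
    (hσv4 : ∀ i j s t : Fin N, ¬(i = j ∧ s = t) → ¬(i < j ∧ s = j ∧ t = i) →
      σ (x i j) (x s t) = 0) :
    ∀ h : H, σ (detq q N x) h = Coalgebra.counit h ∧
      σ h (detq q N x) = Coalgebra.counit h :=
  statement17_general N q z hq hz x hrel1 hrel3 hrel4 hcomul hcounit hgen σ hσ1 hσ2 hσ3 hσv1 hσv2
    hσv4
end
end
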